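/- arXiv:2308.04242 — 3 statements merged into one kernel-verified Lean document; each statement's English description precedes it below -/
import Mathlib

section
/- Let f : [0, ∞) → [0, ∞) be measurable, α > −1, and suppose f(t)/t^α → g ∈ [0, ∞) as t ↓ 0. Let t₊, t₋ : (0, ∞) → [0, ∞) satisfy t₊(ε)/ε → h and t₋(ε)/ε → h as ε ↓ 0 for some h ≥ 0, with t₊(ε) ≤ t₋(ε). Then with γ = 1/(α+1), both (1/ε)∫_0^{t₊(ε^γ)} f(t) dt and (1/ε)∫_0^{t₋(ε^γ)} f(t) dt converge to g·h^{α+1}/(α+1) as ε ↓ 0. -/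
open MeasureTheory Filter Set Real

lemma aux_bound {f : ℝ → ℝ} (hf : Measurable f) (hf0 : ∀ t, 0 ≤ f t) {α g : ℝ}
    (hα : -1 < α) (hg : 0 ≤ g) {δ r : ℝ} (hδ : 0 < δ) 
    (hb : ∀ t ∈ Set.Ioo (0:ℝ) r, |f t / t ^ α - g| < δ) {x : ℝ} (hx : 0 < x) (hxr : x < r) :
    IntervalIntegrable f volume 0 x ∧
      (g - δ) * (x ^ (α + 1) / (α + 1)) ≤ (∫ t in (0:ℝ)..x, f t) ∧
      (∫ t in (0:ℝ)..x, f t) ≤ (g + δ) * (x ^ (α + 1) / (α + 1)) := by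
  have ha1 : (0:ℝ) < α + 1 := by linarith
  have hupper : ∀ t ∈ Set.Ioc (0:ℝ) x, f t ≤ (g + δ) * t ^ α := by
    intro t ht
    have htr : t ∈ Set.Ioo (0:ℝ) r := ⟨ht.1, lt_of_le_of_lt ht.2 hxr⟩
    have htp : (0:ℝ) < t ^ α := Real.rpow_pos_of_pos ht.1 α
    have := (abs_lt.1 (hb t htr)).2
    have := (div_lt_iff₀ htp).1 (by linarith : f t / t ^ α < g + δ)
    linarith
  have hlower : ∀ t ∈ Set.Ioc (0:ℝ) x, (g - δ) * t ^ α ≤ f t := by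
    intro t ht
    have htr : t ∈ Set.Ioo (0:ℝ) r := ⟨ht.1, lt_of_le_of_lt ht.2 hxr⟩
    have htp : (0:ℝ) < t ^ α := Real.rpow_pos_of_pos ht.1 α
    have := (abs_lt.1 (hb t htr)).1
    have := (lt_div_iff₀ htp).1 (by linarith : g - δ < f t / t ^ α)
    linarith
  have hir : IntervalIntegrable (fun t => t ^ α) volume 0 x :=
    intervalIntegral.intervalIntegrable_rpow' hα
  have hiu : IntervalIntegrable (fun t => (g + δ) * t ^ α) volume 0 x := hir.const_mul _
  have hil : IntervalIntegrable (fun t => (g - δ) * t ^ α) volume 0 x := hir.const_mul _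
  have huIoc : Set.uIoc (0:ℝ) x = Set.Ioc 0 x := Set.uIoc_of_le hx.le
  have hfint : IntervalIntegrable f volume 0 x := by
    apply hiu.mono_fun' (hf.aestronglyMeasurable.restrict)
    rw [huIoc]
    filter_upwards [ae_restrict_mem measurableSet_Ioc] with t ht
    rw [Real.norm_eq_abs, abs_of_nonneg (hf0 t)]
    exact hupper t ht
  have hae0 : ∀ᵐ t ∂(volume : Measure ℝ), t ≠ (0:ℝ) := by
    rw [ae_iff]; simp
  have hrp : ∫ t in (0:ℝ)..x, t ^ α = x ^ (α + 1) / (α + 1) := by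
    rw [integral_rpow (Or.inl hα), Real.zero_rpow (ne_of_gt ha1), sub_zero]
  refine ⟨hfint, ?_, ?_⟩
  · have := intervalIntegral.integral_mono_ae_restrict hx.le hil hfint
      (((ae_restrict_iff' measurableSet_Icc).2 (hae0.mono fun t ht hIcc =>
        hlower t ⟨lt_of_le_of_ne hIcc.1 (Ne.symm ht), hIcc.2⟩)))
    rwa [intervalIntegral.integral_const_mul, hrp] at this
  · have := intervalIntegral.integral_mono_ae_restrict hx.le hfint hiu
      (((ae_restrict_iff' measurableSet_Icc).2 (hae0.mono fun t ht hIcc =>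
        hupper t ⟨lt_of_le_of_ne hIcc.1 (Ne.symm ht), hIcc.2⟩)))
    rwa [intervalIntegral.integral_const_mul, hrp] at this

lemma aux_ratio {f : ℝ → ℝ} (hf : Measurable f) (hf0 : ∀ t, 0 ≤ f t) {α g : ℝ}
    (hα : -1 < α) (hg : 0 ≤ g)
    (hflim : Filter.Tendsto (fun t => f t / t ^ α) (nhdsWithin 0 (Set.Ioi 0)) (nhds g)) :
    Filter.Tendsto (fun x => (∫ t in (0:ℝ)..x, f t) / x ^ (α + 1))
      (nhdsWithin 0 (Set.Ioi 0)) (nhds (g / (α + 1))) := by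
  have ha1 : (0:ℝ) < α + 1 := by linarith
  rw [Metric.tendsto_nhdsWithin_nhds]
  intro ε hε
  set δ : ℝ := ε * (α + 1) / 2 with hδdef
  have hδ : 0 < δ := by positivity
  obtain ⟨r, hr, hrb⟩ := Metric.tendsto_nhdsWithin_nhds.1 hflim δ hδ
  refine ⟨r, hr, fun {x} hxmem hxd => ?_⟩
  have hx : 0 < x := hxmem
  have hxr : x < r := by
    rw [Real.dist_eq, sub_zero, abs_of_pos hx] at hxd; exact hxd
  have hb : ∀ t ∈ Set.Ioo (0:ℝ) r, |f t / t ^ α - g| < δ := by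
    intro t ht
    have := hrb (Set.mem_Ioi.2 ht.1) (by rw [Real.dist_eq, sub_zero, abs_of_pos ht.1]; exact ht.2)
    rwa [Real.dist_eq] at this
  obtain ⟨-, hlo, hhi⟩ := aux_bound hf hf0 hα hg hδ hb hx hxr
  have hxp : (0:ℝ) < x ^ (α + 1) := Real.rpow_pos_of_pos hx _
  have h1 : (∫ t in (0:ℝ)..x, f t) / x ^ (α + 1) ≤ (g + δ) / (α + 1) := by
    rw [div_le_div_iff₀ hxp ha1]
    have e : (g + δ) * (x ^ (α + 1) / (α + 1)) * (α + 1) = (g + δ) * x ^ (α + 1) := by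
      field_simp
    nlinarith [mul_le_mul_of_nonneg_right hhi ha1.le]
  have h2 : (g - δ) / (α + 1) ≤ (∫ t in (0:ℝ)..x, f t) / x ^ (α + 1) := by
    rw [div_le_div_iff₀ ha1 hxp]
    have e : (g - δ) * (x ^ (α + 1) / (α + 1)) * (α + 1) = (g - δ) * x ^ (α + 1) := by
      field_simp
    nlinarith [mul_le_mul_of_nonneg_right hlo ha1.le]
  rw [Real.dist_eq, abs_lt]
  have eδ : δ / (α + 1) = ε / 2 := by
    rw [div_eq_iff (ne_of_gt ha1), hδdef]; ring
  have e1 : (g + δ) / (α + 1) = g / (α + 1) + ε / 2 := by rw [add_div, eδ]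
  have e2 : (g - δ) / (α + 1) = g / (α + 1) - ε / 2 := by rw [sub_div, eδ]
  constructor <;> linarith

lemma aux_main (f : ℝ → ℝ) (hf : Measurable f) (hf0 : ∀ t, 0 ≤ f t)
    (α : ℝ) (hα : -1 < α) (g : ℝ) (hg : 0 ≤ g)
    (hflim : Filter.Tendsto (fun t => f t / t ^ α) (nhdsWithin 0 (Set.Ioi 0)) (nhds g))
    (s : ℝ → ℝ) (hs0 : ∀ ε, 0 ≤ s ε) (h : ℝ) (hh : 0 ≤ h)
    (hts : Filter.Tendsto (fun ε => s ε / ε) (nhdsWithin 0 (Set.Ioi 0)) (nhds h))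
    (γ : ℝ) (hγ : γ = 1 / (α + 1)) :
    Filter.Tendsto (fun ε : ℝ => (1 / ε) * ∫ t in (0:ℝ)..(s (ε ^ γ)), f t)
      (nhdsWithin 0 (Set.Ioi 0)) (nhds (g * h ^ (α + 1) / (α + 1))) := by
  have ha1 : (0:ℝ) < α + 1 := by linarith
  have hγpos : 0 < γ := by rw [hγ]; positivity
  -- the map ε ↦ ε ^ γ
  have hmap : Filter.Tendsto (fun ε : ℝ => ε ^ γ)
      (nhdsWithin 0 (Set.Ioi 0)) (nhdsWithin 0 (Set.Ioi 0)) := by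
    rw [tendsto_nhdsWithin_iff]
    constructor
    · have := (Real.continuousAt_rpow_const 0 γ (Or.inr hγpos.le)).tendsto
      rw [Real.zero_rpow (ne_of_gt hγpos)] at this
      exact this.mono_left nhdsWithin_le_nhds
    · filter_upwards [self_mem_nhdsWithin] with ε hε
      exact Real.rpow_pos_of_pos hε γ
  -- s tends to 0 within Ici 0
  have hsIci : Filter.Tendsto s (nhdsWithin 0 (Set.Ioi 0)) (nhdsWithin 0 (Set.Ici 0)) := by
    rw [tendsto_nhdsWithin_iff]
    constructor
    · have h1 : Filter.Tendsto (fun ε : ℝ => (s ε / ε) * ε) (nhdsWithin 0 (Set.Ioi 0))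
          (nhds (h * 0)) := hts.mul (tendsto_id.mono_left nhdsWithin_le_nhds)
      rw [mul_zero] at h1
      apply h1.congr'
      filter_upwards [self_mem_nhdsWithin] with ε hε
      exact div_mul_cancel₀ _ (ne_of_gt (Set.mem_Ioi.1 hε))
    · exact Filter.Eventually.of_forall fun ε => hs0 ε
  -- the normalized integral G
  set G : ℝ → ℝ := fun x => if x = 0 then g / (α + 1) else (∫ t in (0:ℝ)..x, f t) / x ^ (α + 1)
    with hGdef
  have hG : Filter.Tendsto G (nhdsWithin 0 (Set.Ici 0)) (nhds (g / (α + 1))) := by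
    have hIci : Set.Ici (0:ℝ) = insert 0 (Set.Ioi 0) := by
      ext t; simp [Set.mem_insert_iff, eq_comm, le_iff_lt_or_eq, or_comm]
    rw [hIci, nhdsWithin_insert, Filter.tendsto_sup]
    constructor
    · have : G 0 = g / (α + 1) := by simp [hGdef]
      rw [Filter.tendsto_pure_left]
      intro U hU; rw [this]; exact mem_of_mem_nhds hU
    · apply (aux_ratio hf hf0 hα hg hflim).congr'
      filter_upwards [self_mem_nhdsWithin] with x hx
      simp [hGdef, ne_of_gt (show (0:ℝ) < x from hx)]
  have hGs : Filter.Tendsto (fun ε => G (s ε)) (nhdsWithin 0 (Set.Ioi 0))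
      (nhds (g / (α + 1))) := hG.comp hsIci
  have hpow : Filter.Tendsto (fun ε => (s ε / ε) ^ (α + 1)) (nhdsWithin 0 (Set.Ioi 0))
      (nhds (h ^ (α + 1))) :=
    ((Real.continuousAt_rpow_const h (α + 1) (Or.inr ha1.le)).tendsto).comp hts
  have hprod : Filter.Tendsto (fun ε => G (s ε) * (s ε / ε) ^ (α + 1))
      (nhdsWithin 0 (Set.Ioi 0)) (nhds (g * h ^ (α + 1) / (α + 1))) := by
    have := hGs.mul hpow
    have e : g / (α + 1) * h ^ (α + 1) = g * h ^ (α + 1) / (α + 1) := by ring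
    rwa [e] at this
  -- pointwise identity
  have hkey : ∀ ε : ℝ, 0 < ε →
      G (s ε) * (s ε / ε) ^ (α + 1) = (∫ t in (0:ℝ)..(s ε), f t) / ε ^ (α + 1) := by
    intro ε hε
    rcases eq_or_lt_of_le (hs0 ε) with h0 | hpos
    · rw [hGdef, ← h0]
      simp [intervalIntegral.integral_same, Real.zero_rpow (ne_of_gt ha1)]
    · have hsp : (0:ℝ) < (s ε) ^ (α + 1) := Real.rpow_pos_of_pos hpos _
      have hεp : (0:ℝ) < ε ^ (α + 1) := Real.rpow_pos_of_pos hε _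
      rw [hGdef]
      simp only [if_neg (ne_of_gt hpos)]
      rw [Real.div_rpow (hs0 ε) hε.le]
      field_simp
  -- conclude for s itself
  have hbase : Filter.Tendsto (fun ε => (∫ t in (0:ℝ)..(s ε), f t) / ε ^ (α + 1))
      (nhdsWithin 0 (Set.Ioi 0)) (nhds (g * h ^ (α + 1) / (α + 1))) := by
    apply hprod.congr'
    filter_upwards [self_mem_nhdsWithin] with ε hε
    exact hkey ε hε
  -- compose with ε ↦ ε ^ γ
  have hcomp := hbase.comp hmap
  apply hcomp.congr'
  filter_upwards [self_mem_nhdsWithin] with ε hε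
  have hεp : (0:ℝ) < ε := hε
  have he : ((ε ^ γ) ^ (α + 1)) = ε := by
    rw [← Real.rpow_mul hεp.le, hγ, one_div, inv_mul_cancel₀ (ne_of_gt ha1), Real.rpow_one]
  simp only [Function.comp_apply, he]
  rw [one_div, inv_mul_eq_div]

/-- squeeze computation: with `f(t)/t^α → g` as `t ↓ 0`, cutoffs
`t₊(ε) ≤ t₋(ε)` with `t₊(ε)/ε → h`, `t₋(ε)/ε → h`, and `γ = 1/(α+1)`, both
`(1/ε)∫₀^{t₊(ε^γ)} f` and `(1/ε)∫₀^{t₋(ε^γ)} f` converge to `g h^{α+1}/(α+1)`. -/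
theorem tendsto_integral_cutoff (f : ℝ → ℝ) (hf : Measurable f) (hf0 : ∀ t, 0 ≤ f t)
    (α : ℝ) (hα : -1 < α) (g : ℝ) (hg : 0 ≤ g)
    (hflim : Filter.Tendsto (fun t => f t / t ^ α) (nhdsWithin 0 (Set.Ioi 0)) (nhds g))
    (tp tm : ℝ → ℝ) (htp0 : ∀ ε, 0 ≤ tp ε) (htm0 : ∀ ε, 0 ≤ tm ε)
    (h : ℝ) (hh : 0 ≤ h)
    (htp : Filter.Tendsto (fun ε => tp ε / ε) (nhdsWithin 0 (Set.Ioi 0)) (nhds h))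
    (htm : Filter.Tendsto (fun ε => tm ε / ε) (nhdsWithin 0 (Set.Ioi 0)) (nhds h))
    (hle : ∀ ε, tp ε ≤ tm ε) (γ : ℝ) (hγ : γ = 1 / (α + 1)) :
    Filter.Tendsto (fun ε : ℝ => (1 / ε) * ∫ t in (0:ℝ)..(tp (ε ^ γ)), f t)
      (nhdsWithin 0 (Set.Ioi 0)) (nhds (g * h ^ (α + 1) / (α + 1))) ∧
    Filter.Tendsto (fun ε : ℝ => (1 / ε) * ∫ t in (0:ℝ)..(tm (ε ^ γ)), f t)
      (nhdsWithin 0 (Set.Ioi 0)) (nhds (g * h ^ (α + 1) / (α + 1))) :=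
  ⟨aux_main f hf hf0 α hα g hg hflim tp htp0 h hh htp γ hγ,
   aux_main f hf hf0 α hα g hg hflim tm htm0 h hh htm γ hγ⟩
end

section
/- Let A and B be regular closed locally finite unions of convex bodies in ℝ^d. Then the set C := {x ∈ ℝ^d : A ∩ (B − x) is not regular closed} has Lebesgue measure zero (it is contained in a countable union of boundaries of convex bodies). -/
open MeasureTheory Set Pointwise

/-!
Off the Lebesgue-null set `⋃ i j, frontier (KB j - KA i)` every translation is good. Given
`p ∈ A ∩ (B - x)`, regular closedness and local finiteness provide pieces `KA i ∋ p` and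
`KB j ∋ p + x` with nonempty interiors. Then `x ∈ KB j - KA i` is an interior point, and since
`interior (KB j - KA i) = interior (KB j) - interior (KA i)` the convex set `KA i ∩ (KB j - x)`
has an interior point; hence `p` lies in the closure of its interior.
-/

section Topology

variable {X ι : Type*} [TopologicalSpace X] {K : ι → Set X}

theorem exists_inter_interior_nonempty_of_subset_biUnion (hK : ∀ i, IsClosed (K i))
    {s : Set ι} (hs : s.Finite) {V : Set X} (hV : IsOpen V) (hVne : V.Nonempty)
    (hVs : V ⊆ ⋃ i ∈ s, K i) : ∃ i ∈ s, (V ∩ interior (K i)).Nonempty := by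
  induction s, hs using Set.Finite.induction_on generalizing V with
  | empty => simpa using hVs hVne.some_mem
  | @insert i s _ _ ih =>
    by_cases hVi : V ⊆ K i
    · exact ⟨i, mem_insert i s, by rwa [inter_eq_left.2 (interior_maximal hVi hV)]⟩
    · obtain ⟨j, hj, hVj⟩ := ih (hV.sdiff (hK i)) (sdiff_nonempty.2 hVi) fun y hy => by
        simpa [hy.2] using hVs hy.1
      exact ⟨j, mem_insert_of_mem i hj, hVj.mono (inter_subset_inter_left _ sdiff_subset)⟩

theorem LocallyFinite.exists_inter_interior_nonempty (hloc : LocallyFinite K)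
    (hK : ∀ i, IsClosed (K i)) {V : Set X} (hV : IsOpen V) (hVne : V.Nonempty)
    (hVK : V ⊆ ⋃ i, K i) : ∃ i, (V ∩ interior (K i)).Nonempty := by
  obtain ⟨p, hp⟩ := hVne
  obtain ⟨W, hW, hWfin⟩ := hloc p
  obtain ⟨i, -, q, ⟨hqV, -⟩, hqi⟩ :=
    exists_inter_interior_nonempty_of_subset_biUnion hK hWfin (hV.inter isOpen_interior)
      ⟨p, hp, mem_interior_iff_mem_nhds.2 hW⟩ fun q hq => by
        obtain ⟨i, hqi⟩ := mem_iUnion.1 (hVK hq.1)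
        exact mem_biUnion ⟨q, hqi, interior_subset hq.2⟩ hqi
  exact ⟨i, q, hqV, hqi⟩

theorem LocallyFinite.subset_iUnion_closure_interior (hloc : LocallyFinite K)
    (hK : ∀ i, IsClosed (K i)) (hreg : ⋃ i, K i = closure (interior (⋃ i, K i))) :
    ⋃ i, K i ⊆ ⋃ i, closure (interior (K i)) := by
  have hint : interior (⋃ i, K i) ⊆ closure (⋃ i, interior (K i)) := fun p hp =>
    mem_closure_iff.2 fun o ho hpo => by
      obtain ⟨i, q, ⟨hqo, -⟩, hqi⟩ := hloc.exists_inter_interior_nonempty hK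
        (ho.inter isOpen_interior) ⟨p, hpo, hp⟩ (inter_subset_right.trans interior_subset)
      exact ⟨q, hqo, mem_iUnion.2 ⟨i, hqi⟩⟩
  calc ⋃ i, K i = closure (interior (⋃ i, K i)) := hreg
    _ ⊆ closure (⋃ i, interior (K i)) := closure_minimal hint isClosed_closure
    _ = ⋃ i, closure (interior (K i)) := (hloc.subset fun i => interior_subset).closure_iUnion

theorem LocallyFinite.exists_mem_with_nonempty_interior (hloc : LocallyFinite K)
    (hK : ∀ i, IsClosed (K i)) (hreg : ⋃ i, K i = closure (interior (⋃ i, K i)))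
    {p : X} (hp : p ∈ ⋃ i, K i) : ∃ i, p ∈ K i ∧ (interior (K i)).Nonempty := by
  obtain ⟨i, hpi⟩ := mem_iUnion.1 (hloc.subset_iUnion_closure_interior hK hreg hp)
  exact ⟨i, closure_minimal interior_subset (hK i) hpi, closure_nonempty_iff.1 ⟨p, hpi⟩⟩

end Topology

section Convex

variable {E : Type*} [AddCommGroup E] [Module ℝ E] [TopologicalSpace E]
  [IsTopologicalAddGroup E] [ContinuousSMul ℝ E] {K L : Set E}

theorem Convex.subset_closure_interior (hK : Convex ℝ K) (hKint : (interior K).Nonempty) :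
    K ⊆ closure (interior K) :=
  (hK.closure_interior_eq_closure_of_nonempty_interior hKint).symm ▸ subset_closure

theorem Convex.interior_sub (hK : Convex ℝ K) (hL : Convex ℝ L) (hKint : (interior K).Nonempty)
    (hLint : (interior L).Nonempty) : interior (K - L) = interior K - interior L := by
  set D := interior K - interior L
  have hDopen : IsOpen D := isOpen_interior.sub_right
  have hKL : K - L ⊆ closure D := by
    rintro _ ⟨u, hu, v, hv, rfl⟩
    exact map_mem_closure₂ continuous_sub (hK.subset_closure_interior hKint hu)
      (hL.subset_closure_interior hLint hv) fun a ha b hb => sub_mem_sub ha hb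
  refine subset_antisymm ?_ (interior_maximal (sub_subset_sub interior_subset interior_subset)
    hDopen)
  calc interior (K - L) ⊆ interior (closure D) := interior_mono hKL
    _ = D := by
      rw [(hK.interior.sub hL.interior).interior_closure_eq_interior_of_nonempty_interior
        (by rw [hDopen.interior_eq]; exact hKint.sub hLint), hDopen.interior_eq]

theorem Convex.inter_image_sub_subset_closure_interior (hK : Convex ℝ K) (hL : Convex ℝ L)
    {x : E} (hx : x ∈ interior L - interior K) :
    K ∩ (· - x) '' L ⊆ closure (interior (K ∩ (· - x) '' L)) := by
  have hconv : Convex ℝ ((· - x) '' L) := sub_singleton (b := x) ▸ hL.sub (convex_singleton x)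
  have hint : interior ((· - x) '' L) = (· - x) '' interior L :=
    ((Homeomorph.subRight x).image_interior L).symm
  obtain ⟨c, hc, a, ha, rfl⟩ := hx
  refine (hK.inter hconv).subset_closure_interior ⟨a, ?_⟩
  rw [interior_inter, hint]
  exact ⟨ha, c, hc, sub_sub_cancel c a⟩

end Convex

/-- for regular closed sets `A, B` that are locally finite unions of convex
bodies, the set of translations `x` for which `A ∩ (B - x)` is not regular closed has
Lebesgue measure zero. -/
theorem bad_translations_null {d : ℕ}
    (A B : Set (EuclideanSpace ℝ (Fin d)))
    (KA KB : ℕ → Set (EuclideanSpace ℝ (Fin d)))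
    (hKA : ∀ i, IsCompact (KA i) ∧ Convex ℝ (KA i) ∧ (KA i).Nonempty)
    (hKB : ∀ i, IsCompact (KB i) ∧ Convex ℝ (KB i) ∧ (KB i).Nonempty)
    (hAloc : LocallyFinite KA) (hBloc : LocallyFinite KB)
    (hA : A = ⋃ i, KA i) (hB : B = ⋃ i, KB i)
    (hAreg : A = closure (interior A)) (hBreg : B = closure (interior B)) :
    volume {x | A ∩ ((fun b => b - x) '' B) ≠
        closure (interior (A ∩ ((fun b => b - x) '' B)))} = 0 := by
  refine measure_mono_null (t := ⋃ i, ⋃ j, frontier (KB j - KA i)) ?_ <|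
    measure_iUnion_null fun i => measure_iUnion_null fun j =>
      ((hKB j).2.1.sub (hKA i).2.1).addHaar_frontier volume
  intro x hx
  contrapose! hx
  simp only [mem_iUnion, not_exists] at hx
  have hclosed : IsClosed (A ∩ (· - x) '' B) :=
    (hAreg ▸ isClosed_closure).inter (isClosedMap_sub_right x _ (hBreg ▸ isClosed_closure))
  refine not_not_intro <| subset_antisymm ?_ (closure_minimal interior_subset hclosed)
  subst hA hB
  rintro _ ⟨hpA, b, hbB, rfl⟩
  obtain ⟨i, hai, hKAi⟩ :=
    hAloc.exists_mem_with_nonempty_interior (fun i => (hKA i).1.isClosed) hAreg hpA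
  obtain ⟨j, hbj, hKBj⟩ :=
    hBloc.exists_mem_with_nonempty_interior (fun j => (hKB j).1.isClosed) hBreg hbB
  have hxint : x ∈ interior (KB j) - interior (KA i) := by
    rw [← (hKB j).2.1.interior_sub (hKA i).2.1 hKBj hKAi, ← self_sdiff_frontier]
    exact ⟨⟨b, hbj, b - x, hai, sub_sub_cancel b x⟩, hx i j⟩
  refine closure_mono (interior_mono (inter_subset_inter (subset_iUnion KA i)
    (image_mono (subset_iUnion KB j)))) ?_
  exact (hKA i).2.1.inter_image_sub_subset_closure_interior (hKB j).2.1 hxint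
    ⟨hai, b, hbj, rfl⟩
end

section
/- Let ξ_1, …, ξ_n be i.i.d. points distributed according to an absolutely continuous probability measure μ on a regular closed set K ⊆ ℝ^d belonging to the extended convex ring. Then the random set X_n := ⋂_{i=1}^n (K − ξ_i) is almost surely regular closed. -/
/-!
Split `K` into its convex pieces. For a tuple `t` of translations, the pieces `C i - t i` (written
`(· + t i) ⁻¹' C i`) have a common interior point exactly when `t` lies in an open set
`U = overlappingTranslates C` which, as a sum of a product of
interiors and the diagonal, is convex; if they merely meet, `t` lies in the closure of `U`, since
each piece has interior points to move towards. So the intersection of translated pieces is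
nonempty with empty interior only for `t` in the frontier of the convex set `U`, which is
Lebesgue-null. Pieces with empty interior can be discarded: by Baire they do not contribute to the
regular closed set `K`. Off the countably many frontiers, every point of `⋂ i, (K - t i)` lies in
a convex intersection of pieces with interior points, hence in the closure of its interior.
-/

open MeasureTheory ProbabilityTheory Set Filter Topology

section Translates

variable {E ι : Type*} [NormedAddCommGroup E]

def overlappingTranslates (C : ι → Set E) : Set (ι → E) :=
  {t | ∃ x, ∀ i, x + t i ∈ interior (C i)}

lemma isOpen_overlappingTranslates [Finite ι] (C : ι → Set E) :
    IsOpen (overlappingTranslates C) := by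
  have : overlappingTranslates C = ⋃ x, ⋂ i, (fun t : ι → E => x + t i) ⁻¹' interior (C i) := by
    ext t; simp [overlappingTranslates]
  rw [this]
  exact isOpen_iUnion fun x => isOpen_iInter_of_finite fun i =>
    isOpen_interior.preimage (by fun_prop)

lemma nonempty_interior_iInter_preimage_add [Finite ι] {C : ι → Set E} {t : ι → E}
    (ht : t ∈ overlappingTranslates C) : (interior (⋂ i, (· + t i) ⁻¹' C i)).Nonempty := by
  obtain ⟨x, hx⟩ := ht
  refine ⟨x, ?_⟩
  rw [interior_iInter_of_finite]
  exact mem_iInter.2 fun i =>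
    preimage_interior_subset_interior_preimage (continuous_add_const (t i)) (hx i)

variable [NormedSpace ℝ E]

lemma convex_overlappingTranslates {C : ι → Set E} (hC : ∀ i, Convex ℝ (C i)) :
    Convex ℝ (overlappingTranslates C) := by
  rintro t ⟨x, hx⟩ t' ⟨x', hx'⟩ a b ha hb hab
  refine ⟨a • x + b • x', fun i => ?_⟩
  convert (hC i).interior (hx i) (hx' i) ha hb hab using 1
  simp only [Pi.add_apply, Pi.smul_apply]
  module

lemma mem_closure_overlappingTranslates {C : ι → Set E} (hC : ∀ i, Convex ℝ (C i))
    (hCint : ∀ i, (interior (C i)).Nonempty) {t : ι → E}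
    (ht : (⋂ i, (· + t i) ⁻¹' C i).Nonempty) : t ∈ closure (overlappingTranslates C) := by
  obtain ⟨x, hx⟩ := ht
  rw [mem_iInter] at hx
  choose y hy using hCint
  -- push each `x + t i` a fraction `ε` of the way towards the interior point `y i`
  set s : ℝ → ι → E := fun ε i => t i + ε • (y i - (x + t i))
  have hlim : Tendsto s (𝓝[>] 0) (𝓝 t) := by
    have hs : Continuous s := by fun_prop
    simpa [s] using hs.continuousAt.tendsto.mono_left (nhdsWithin_le_nhds (a := (0 : ℝ)))
  refine mem_closure_of_tendsto hlim ?_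
  filter_upwards [Ioc_mem_nhdsGT one_pos] with ε hε
  exact ⟨x, fun i => by
    simpa only [s, add_assoc] using (hC i).add_smul_sub_mem_interior (hx i) (hy i) hε⟩

lemma mem_frontier_overlappingTranslates [Finite ι] {C : ι → Set E}
    (hC : ∀ i, Convex ℝ (C i)) (hCint : ∀ i, (interior (C i)).Nonempty) {t : ι → E}
    (hne : (⋂ i, (· + t i) ⁻¹' C i).Nonempty)
    (hint : ¬ (interior (⋂ i, (· + t i) ⁻¹' C i)).Nonempty) :
    t ∈ frontier (overlappingTranslates C) := by
  rw [(isOpen_overlappingTranslates C).frontier_eq]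
  exact ⟨mem_closure_overlappingTranslates hC hCint hne,
    fun ht => hint (nonempty_interior_iInter_preimage_add ht)⟩

lemma iInter_preimage_add_eq_closure_interior [Finite ι] {J : Type*} {K : Set E}
    {A : J → Set E} (hA : ∀ j, Convex ℝ (A j))
    (hKA : K = ⋃ j : {j // (interior (A j)).Nonempty}, A j) (hK : IsClosed K) {t : ι → E}
    (ht : ∀ f : ι → {j // (interior (A j)).Nonempty},
      t ∉ frontier (overlappingTranslates fun i => A (f i))) :
    ⋂ i, (· + t i) ⁻¹' K = closure (interior (⋂ i, (· + t i) ⁻¹' K)) := by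
  refine Subset.antisymm (fun x hx => ?_) (closure_minimal interior_subset
    (isClosed_iInter fun i => hK.preimage (continuous_add_const _)))
  have hpiece : ∀ i, ∃ j : {j // (interior (A j)).Nonempty}, x + t i ∈ A j := fun i =>
    mem_iUnion.1 (hKA ▸ mem_iInter.1 hx i)
  choose f hf using hpiece
  set P := ⋂ i, (· + t i) ⁻¹' A (f i)
  have hxP : x ∈ P := mem_iInter.2 hf
  have hPint : (interior P).Nonempty := by
    by_contra h
    exact ht f (mem_frontier_overlappingTranslates (fun i => hA _) (fun i => (f i).2) ⟨x, hxP⟩ h)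
  have hPconv : Convex ℝ P := convex_iInter fun i => (hA _).translate_preimage_left _
  have hPK : P ⊆ ⋂ i, (· + t i) ⁻¹' K :=
    iInter_mono fun i => preimage_mono (hKA ▸ subset_iUnion (fun j : {j // _} => A j) (f i))
  refine closure_mono (interior_mono hPK) ?_
  rw [hPconv.closure_interior_eq_closure_of_nonempty_interior hPint]
  exact subset_closure hxP

end Translates

lemma eq_iUnion_nonempty_interior_of_locallyFinite {X ι : Type*} [TopologicalSpace X]
    [BaireSpace X] [Countable ι] {K : Set X} {A : ι → Set X} (hA : ∀ i, IsClosed (A i))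
    (hloc : LocallyFinite A) (hK : K = ⋃ i, A i) (hreg : K = closure (interior K)) :
    K = ⋃ j : {i // (interior (A i)).Nonempty}, A j := by
  set F := ⋃ j : {i // (interior (A i)).Nonempty}, A j
  have hF : IsClosed F :=
    (hloc.comp_injective Subtype.val_injective).isClosed_iUnion fun j => hA j
  have hthin : IsMeagre (⋃ j : {i // ¬ (interior (A i)).Nonempty}, A j) :=
    isMeagre_iUnion fun j =>
      ((hA j).isNowhereDense_iff.2 (not_nonempty_iff_eq_empty.1 j.2)).isMeagre
  have hintK : interior K ⊆ F := by
    refine sdiff_eq_empty.1 (not_nonempty_iff_eq_empty.1 fun hne =>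
      not_isMeagre_of_isOpen (isOpen_interior.sdiff hF) hne (hthin.mono ?_))
    rintro x ⟨hxK, hxF⟩
    obtain ⟨i, hi⟩ := mem_iUnion.1 (hK ▸ interior_subset hxK)
    exact mem_iUnion.2 ⟨⟨i, fun h => hxF (mem_iUnion.2 ⟨⟨i, h⟩, hi⟩)⟩, hi⟩
  refine Subset.antisymm ?_ (iUnion_subset fun j => hK ▸ subset_iUnion A j)
  rw [hreg]
  exact closure_minimal hintK hF

lemma MeasureTheory.Measure.AbsolutelyContinuous.pi_fin {α : Type*} [MeasurableSpace α]
    {μ ν : Measure α} [SigmaFinite μ] [SigmaFinite ν] (h : μ ≪ ν) :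
    ∀ n, Measure.pi (fun _ : Fin n => μ) ≪ Measure.pi (fun _ : Fin n => ν)
  | 0 => by rw [Measure.pi_of_empty, Measure.pi_of_empty]
  | n + 1 => by
    rw [← (measurePreserving_piFinSuccAbove (fun _ => μ) 0).symm.map_eq,
      ← (measurePreserving_piFinSuccAbove (fun _ => ν) 0).symm.map_eq]
    exact (h.prod (pi_fin h n)).map (MeasurableEquiv.measurable _)

theorem Xn_ae_regular_closed_general {d n : ℕ} {Ω : Type*} [MeasureSpace Ω]
    [IsProbabilityMeasure (ℙ : Measure Ω)]
    (μ : Measure (EuclideanSpace ℝ (Fin d))) [IsProbabilityMeasure μ]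
    (hac : μ ≪ volume)
    (K : Set (EuclideanSpace ℝ (Fin d)))
    (KA : ℕ → Set (EuclideanSpace ℝ (Fin d)))
    (hKA : ∀ i, IsCompact (KA i) ∧ Convex ℝ (KA i) ∧ (KA i).Nonempty)
    (hKloc : LocallyFinite KA) (hKU : K = ⋃ i, KA i)
    (hKreg : K = closure (interior K))
    (ξ : Fin n → Ω → EuclideanSpace ℝ (Fin d))
    (hmeas : ∀ i, Measurable (ξ i))
    (hindep : iIndepFun ξ ℙ)
    (hlaw : ∀ i, Measure.map (ξ i) ℙ = μ) :
    ∀ᵐ ω ∂(ℙ : Measure Ω),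
      (⋂ i, (fun k => k - ξ i ω) '' K) =
        closure (interior (⋂ i, (fun k => k - ξ i ω) '' K)) := by
  have hKfat := eq_iUnion_nonempty_interior_of_locallyFinite (fun i => (hKA i).1.isClosed)
    hKloc hKU hKreg
  have hjoint : (ℙ : Measure Ω).map (fun ω i => ξ i ω) = Measure.pi fun _ => μ := by
    rw [(iIndepFun_iff_map_fun_eq_pi_map fun i => (hmeas i).aemeasurable).1 hindep]
    simp_rw [hlaw]
  have hgood : ∀ᵐ t ∂(Measure.pi fun _ : Fin n => μ),
      ∀ f : Fin n → {j // (interior (KA j)).Nonempty},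
        t ∉ frontier (overlappingTranslates fun i => KA (f i)) := by
    refine ae_all_iff.2 fun f => measure_eq_zero_iff_ae_notMem.1 ?_
    have hU : Convex ℝ (overlappingTranslates fun i => KA (f i)) :=
      convex_overlappingTranslates fun i => (hKA _).2.1
    exact hac.pi_fin n (hU.addHaar_frontier (Measure.pi fun _ => volume))
  rw [← hjoint] at hgood
  filter_upwards [ae_of_ae_map (by fun_prop) hgood] with ω hω
  simp only [image_sub_right]
  exact iInter_preimage_add_eq_closure_interior (fun j => (hKA j).2.1) hKfat
    (hKreg ▸ isClosed_closure) hω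

/-- for i.i.d. points `ξ₁,…,ξₙ` distributed according to an absolutely
continuous probability measure `μ` on a regular closed set `K` of the extended convex
ring (a locally finite union of convex bodies), the random set `Xₙ = ⋂ᵢ (K - ξᵢ)` is
almost surely regular closed. -/
theorem Xn_ae_regular_closed {d n : ℕ} {Ω : Type*} [MeasureSpace Ω]
    [IsProbabilityMeasure (ℙ : Measure Ω)]
    (μ : Measure (EuclideanSpace ℝ (Fin d))) [IsProbabilityMeasure μ]
    (hac : μ ≪ volume)
    (K : Set (EuclideanSpace ℝ (Fin d)))
    (KA : ℕ → Set (EuclideanSpace ℝ (Fin d)))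
    (hKA : ∀ i, IsCompact (KA i) ∧ Convex ℝ (KA i) ∧ (KA i).Nonempty)
    (hKloc : LocallyFinite KA) (hKU : K = ⋃ i, KA i)
    (hKreg : K = closure (interior K)) (hμK : μ K = 1)
    (ξ : Fin n → Ω → EuclideanSpace ℝ (Fin d))
    (hmeas : ∀ i, Measurable (ξ i))
    (hindep : iIndepFun ξ ℙ)
    (hlaw : ∀ i, Measure.map (ξ i) ℙ = μ) :
    ∀ᵐ ω ∂(ℙ : Measure Ω),
      (⋂ i, (fun k => k - ξ i ω) '' K) =
        closure (interior (⋂ i, (fun k => k - ξ i ω) '' K)) :=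
  Xn_ae_regular_closed_general μ hac K KA hKA hKloc hKU hKreg ξ hmeas hindep hlaw
end
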